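/- Let ω ∈ ℂ with Re ω ≠ 0. If f : ℝ → ℂ is asymptotically almost periodic (f ∈ AAP), then G_ω[f] ∈ AAP; if f ∈ AAP_0, then G_ω[f] ∈ AAP_0. -/

import Mathlib

open MeasureTheory Filter Topology
open scoped ENNReal NNReal

noncomputable section

/-- Bochner-almost periodic function `ℝ → ℂ`. -/
def AP (f : ℝ → ℂ) : Prop :=
  Continuous f ∧ ∀ b : ℕ → ℝ, ∃ φ : ℕ → ℕ, StrictMono φ ∧ ∃ g : ℝ → ℂ,
    TendstoUniformly (fun m t => f (t + b (φ m))) g atTop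

/-- Bounded continuous. -/
def BCb (f : ℝ → ℂ) : Prop := Continuous f ∧ ∃ C : ℝ, ∀ t, ‖f t‖ ≤ C

def BC0 (f : ℝ → ℂ) : Prop := BCb f ∧ Tendsto f atTop (nhds 0)

def C00 (f : ℝ → ℂ) : Prop := BC0 f ∧ Tendsto f atBot (nhds 0)

def Lp0 (p : ℝ) (f : ℝ → ℂ) : Prop :=
  (∃ C : ℝ, ∀ t ≤ (0:ℝ), ‖f t‖ ≤ C) ∧ (∫⁻ t in Set.Ioi (0:ℝ), (‖f t‖₊ : ℝ≥0∞) ^ p) < ⊤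

def LpR (p : ℝ) (f : ℝ → ℂ) : Prop := (∫⁻ t : ℝ, (‖f t‖₊ : ℝ≥0∞) ^ p) < ⊤

def AAP (f : ℝ → ℂ) : Prop :=
  BCb f ∧ ∃ φ g : ℝ → ℂ, (∀ t, f t = φ t + g t) ∧ AP φ ∧ Tendsto g atTop (nhds 0)

def AAP0 (f : ℝ → ℂ) : Prop :=
  BCb f ∧ ∃ φ g : ℝ → ℂ, (∀ t, f t = φ t + g t) ∧ AP φ ∧
    Tendsto g atTop (nhds 0) ∧ Tendsto g atBot (nhds 0)

def APp (p : ℝ) (f : ℝ → ℂ) : Prop :=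
  BCb f ∧ ∃ φ g : ℝ → ℂ, (∀ t, f t = φ t + g t) ∧ AP φ ∧ Lp0 p g

def APp0 (p : ℝ) (f : ℝ → ℂ) : Prop :=
  BCb f ∧ ∃ φ g : ℝ → ℂ, (∀ t, f t = φ t + g t) ∧ AP φ ∧ LpR p g

/-- The Green kernel `g_ω`. -/
def gker (ω : ℂ) (t s : ℝ) : ℂ :=
  if Real.sign ω.re * (t - s) < 0
  then ((-Real.sign ω.re : ℝ) : ℂ) * Complex.exp (ω * ((t - s : ℝ) : ℂ)) else 0

/-- The Green operator `G_ω`. -/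
def Gop (ω : ℂ) (f : ℝ → ℂ) (t : ℝ) : ℂ := ∫ s : ℝ, gker ω t s * f s

/-- The absolute Green operator `I_ω`, with values in `[0,∞]`. -/
def Iop (ω : ℂ) (f : ℝ → ℂ) (t : ℝ) : ℝ≥0∞ := ∫⁻ s : ℝ, (‖gker ω t s * f s‖₊ : ℝ≥0∞)

def Gam {m : ℕ} (γ : Fin m → ℂ) (j : Fin m) : ℂ := ∏ k ∈ Finset.univ.erase j, (γ j - γ k)

/-- The Green operator for the family γ. -/
def GreenOp {m : ℕ} (γ : Fin m → ℂ) (f : ℝ → ℂ) (t : ℝ) : ℂ :=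
  ∑ j, (Gam γ j)⁻¹ * Gop (γ j) f t

def Dpoly {m : ℕ} (γ : Fin m → ℂ) : Polynomial ℂ := ∏ j, (Polynomial.X - Polynomial.C (γ j))

/-- The differential operator with characteristic polynomial `∏ (x - γ j)`. -/
def Dop {m : ℕ} (γ : Fin m → ℂ) (z : ℝ → ℂ) (t : ℝ) : ℂ :=
  ∑ k ∈ Finset.range (m + 1), (Dpoly γ).coeff k * iteratedDeriv k z t

def APm (m : ℕ) (F : ℝ → (Fin m → ℂ) → ℂ) : Prop :=
  Continuous (fun p : ℝ × (Fin m → ℂ) => F p.1 p.2) ∧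
  ∀ b : ℕ → ℝ, ∃ φ : ℕ → ℕ, StrictMono φ ∧ ∃ G : ℝ → (Fin m → ℂ) → ℂ,
    ∀ K : Set (Fin m → ℂ), IsCompact K →
      TendstoUniformlyOn (fun k (p : ℝ × (Fin m → ℂ)) => F (p.1 + b (φ k)) p.2)
        (fun p => G p.1 p.2) atTop (Set.univ ×ˢ K)

def DecayTop (m : ℕ) (h : ℝ → (Fin m → ℂ) → ℂ) : Prop :=
  ∀ K : Set (Fin m → ℂ), IsCompact K →
    TendstoUniformlyOn (fun t x => h t x) 0 atTop K

def DecayBot (m : ℕ) (h : ℝ → (Fin m → ℂ) → ℂ) : Prop :=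
  ∀ K : Set (Fin m → ℂ), IsCompact K →
    TendstoUniformlyOn (fun t x => h t x) 0 atBot K

def AAPm (m : ℕ) (F : ℝ → (Fin m → ℂ) → ℂ) : Prop :=
  Continuous (fun p : ℝ × (Fin m → ℂ) => F p.1 p.2) ∧ (∃ C : ℝ, ∀ t x, ‖F t x‖ ≤ C) ∧
  ∃ Φ h : ℝ → (Fin m → ℂ) → ℂ, (∀ t x, F t x = Φ t x + h t x) ∧ APm m Φ ∧ DecayTop m h

def AAP0m (m : ℕ) (F : ℝ → (Fin m → ℂ) → ℂ) : Prop :=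
  Continuous (fun p : ℝ × (Fin m → ℂ) => F p.1 p.2) ∧ (∃ C : ℝ, ∀ t x, ‖F t x‖ ≤ C) ∧
  ∃ Φ h : ℝ → (Fin m → ℂ) → ℂ, (∀ t x, F t x = Φ t x + h t x) ∧ APm m Φ ∧
    DecayTop m h ∧ DecayBot m h

/-- Complete Bell polynomials. -/
def Bell : ℕ → (ℕ → ℂ) → ℂ
  | 0, _ => 1
  | (i+1), x => ∑ j ∈ Finset.range (i+1), (Nat.choose i j : ℂ) * Bell (i - j) x * x (j+1)
decreasing_by exact Nat.lt_succ_of_le (Nat.sub_le i j)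

/-- `f_i(x_1,…,x_i) = B_{i+1}(x_1,…,x_i,0)`. -/
def fBell (i : ℕ) (x : ℕ → ℂ) : ℂ := Bell (i+1) (fun k => if k = i+1 then 0 else x k)

def Pa (n : ℕ) (a : ℕ → ℂ) : Polynomial ℂ :=
  Polynomial.X ^ n + ∑ i ∈ Finset.range n, Polynomial.C (a i) * Polynomial.X ^ i

def Prl (n : ℕ) (r : ℕ → ℝ → ℂ) (lam : ℂ) (t : ℝ) : ℂ :=
  ∑ k ∈ Finset.range n, lam ^ k * r k t

/-- `(d^k/dλ^k) P(r(t);λ)`. -/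
def PrlD (n k : ℕ) (r : ℕ → ℝ → ℂ) (lam : ℂ) (t : ℝ) : ℂ :=
  (Nat.factorial k : ℂ) * ∑ i ∈ Finset.range n, (Nat.choose i k : ℂ) * lam ^ (i - k) * r i t

def DopP (n : ℕ) (a : ℕ → ℂ) (lam : ℂ) (z : ℝ → ℂ) (t : ℝ) : ℂ :=
  ∑ j ∈ Finset.Icc 1 n, ((Nat.factorial j : ℂ))⁻¹ *
    Polynomial.eval lam (Polynomial.derivative^[j] (Pa n a)) * iteratedDeriv (j-1) z t

def Lterm (n : ℕ) (r : ℕ → ℝ → ℂ) (lam : ℂ) (z : ℝ → ℂ) (t : ℝ) : ℂ :=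
  ∑ k ∈ Finset.Icc 1 (n-1), ((Nat.factorial k : ℂ))⁻¹ * PrlD n k r lam t * iteratedDeriv (k-1) z t

def Fterm (n : ℕ) (a : ℕ → ℂ) (r : ℕ → ℝ → ℂ) (lam : ℂ) (z : ℝ → ℂ) (t : ℝ) : ℂ :=
  ∑ i ∈ Finset.Icc 2 n, ∑ j ∈ Finset.range (n - i + 1),
    (Nat.choose (i+j) j : ℂ) * (a (i+j) + r (i+j) t) * lam ^ j *
      fBell (i-1) (fun k => iteratedDeriv (k-1) z t)

def aT (n : ℕ) {m : ℕ} (γ : Fin m → ℂ) (j : Fin m) : ℝ :=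
  ∑ i ∈ Finset.range (n-1), ‖γ j‖ ^ i

def Lconst (n : ℕ) (γ : Fin (n-1) → ℂ) (r : ℕ → ℝ → ℂ) (lam : ℂ) (β : ℝ) : ℝ≥0∞ :=
  ∑ j, ∑ k ∈ Finset.Icc 1 (n-1),
    ENNReal.ofReal (aT n γ j / (‖Gam γ j‖ * (Nat.factorial k))) *
      ⨆ t : ℝ, Iop (((γ j).re - Real.sign (γ j).re * β : ℝ) : ℂ) (PrlD n k r lam) t

def Qconst (n : ℕ) (γ : Fin (n-1) → ℂ) (a : ℕ → ℂ) (r : ℕ → ℝ → ℂ) (lam : ℂ) (β : ℝ) : ℝ≥0∞ :=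
  ∑ j, ∑ i ∈ Finset.Icc 2 n, ∑ k ∈ Finset.range (i-1),
    ENNReal.ofReal (aT n γ j / ‖Gam γ j‖ * (Nat.choose i k) * ‖lam‖ ^ k) *
      (ENNReal.ofReal (‖a i‖ / |(γ j).re - Real.sign (γ j).re * β|) +
        ⨆ t : ℝ, Iop (((γ j).re - Real.sign (γ j).re * β : ℝ) : ℂ) (r i) t)

def mConst (n : ℕ) (δ : ℝ) : ℝ :=
  sSup { q : ℝ | ∃ i ∈ Finset.Icc 1 (n-1), ∃ X Y : ℕ → ℂ,
    (∑ k ∈ Finset.Icc 1 i, ‖X k‖) ≤ δ ∧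
    (∑ k ∈ Finset.Icc 1 i, ‖Y k‖) ≤ δ ∧
    (∑ k ∈ Finset.Icc 1 i, ‖X k - Y k‖) ≠ 0 ∧
    q = ‖fBell i X - fBell i Y‖ / ∑ k ∈ Finset.Icc 1 i, ‖X k - Y k‖ }


/-!
`G_ω f` is the convolution of `f` with the kernel `u ↦ g_ω(u, 0)`, which is an exponential on one
half-line and zero on the other, hence integrable when `Re ω ≠ 0`. Convolution with an integrable
kernel is a bounded linear operator for the sup norm on bounded continuous functions and commutes
with translations, so it carries uniform limits of translates to uniform limits of translates
(preserving `AP`); by dominated convergence it also preserves decay at `+∞` and at `-∞`.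
-/

open Set
local notation:67 k:67 " ⋆ " f:66 => convolution k f (ContinuousLinearMap.mul ℂ ℂ) MeasureSpace.volume

lemma AP.bounded {φ : ℝ → ℂ} (h : AP φ) : ∃ M : ℝ, ∀ t, ‖φ t‖ ≤ M := by
  by_contra! hb
  choose b hb using fun n : ℕ => hb n
  obtain ⟨ψ, hψ, g, hg⟩ := h.2 b
  have hlim : Tendsto (fun m => ‖φ (b (ψ m))‖) atTop (𝓝 ‖g 0‖) := by
    simpa only [zero_add] using (hg.tendsto_at 0).norm
  have hinf : Tendsto (fun m => ‖φ (b (ψ m))‖) atTop atTop :=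
    tendsto_atTop_mono (fun m => (Nat.cast_le.2 hψ.le_apply).trans (hb (ψ m)).le)
      tendsto_natCast_atTop_atTop
  exact not_tendsto_nhds_of_tendsto_atTop hinf _ hlim

lemma AP.bcb {φ : ℝ → ℂ} (h : AP φ) : BCb φ := ⟨h.1, h.bounded⟩

lemma BCb.sub {f g : ℝ → ℂ} (hf : BCb f) (hg : BCb g) : BCb (f - g) := by
  obtain ⟨hfc, Cf, hCf⟩ := hf
  obtain ⟨hgc, Cg, hCg⟩ := hg
  exact ⟨hfc.sub hgc, Cf + Cg, fun t => (norm_sub_le _ _).trans (add_le_add (hCf t) (hCg t))⟩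

lemma BCb.of_tendstoUniformly {ι : Type*} {l : Filter ι} [l.NeBot] {F : ι → ℝ → ℂ} {g : ℝ → ℂ}
    {C : ℝ} (hF : ∀ n, Continuous (F n)) (hC : ∀ n t, ‖F n t‖ ≤ C)
    (h : TendstoUniformly F g l) : BCb g :=
  ⟨h.continuous (Frequently.of_forall hF), C, fun t =>
    le_of_tendsto (h.tendsto_at t).norm (Eventually.of_forall fun n => hC n t)⟩

section Convolution

variable {k f g : ℝ → ℂ}

lemma BCb.convolutionExists (hk : Integrable k) (hf : BCb f) :
    ConvolutionExists k f (ContinuousLinearMap.mul ℂ ℂ) := fun x => by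
  obtain ⟨hfc, C, hC⟩ := hf
  exact hk.mul_bdd (hfc.comp (continuous_const.sub continuous_id)).aestronglyMeasurable
    (ae_of_all _ fun t => hC _)

lemma BCb.convolution_sub (hk : Integrable k) (hf : BCb f) (hg : BCb g) :
    k ⋆ (f - g) = k ⋆ f - k ⋆ g := by
  ext x
  simp only [convolution_mul, Pi.sub_apply, mul_sub]
  exact integral_sub (hf.convolutionExists hk x) (hg.convolutionExists hk x)

lemma norm_convolution_le {C : ℝ} (hk : Integrable k) (hC : ∀ t, ‖f t‖ ≤ C) (x : ℝ) :
    ‖(k ⋆ f) x‖ ≤ (∫ u, ‖k u‖) * C := by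
  rw [convolution_mul, ← integral_mul_const]
  refine norm_integral_le_of_norm_le (hk.norm.mul_const C) (ae_of_all _ fun u => ?_)
  rw [norm_mul]
  exact mul_le_mul_of_nonneg_left (hC _) (norm_nonneg _)

lemma convolution_apply_add (x c : ℝ) :
    (k ⋆ f) (x + c) = (k ⋆ fun s => f (s + c)) x := by
  simp only [convolution_mul, add_sub_right_comm]

lemma BCb.convolution (hk : Integrable k) (hf : BCb f) : BCb (k ⋆ f) := by
  obtain ⟨hfc, C, hC⟩ := hf
  refine ⟨?_, _, norm_convolution_le hk hC⟩
  exact BddAbove.continuous_convolution_right_of_integrable _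
    ⟨C, forall_mem_range.2 hC⟩ hk hfc

lemma TendstoUniformly.convolution {ι : Type*} {l : Filter ι} {F : ι → ℝ → ℂ}
    (hk : Integrable k) (hF : ∀ n, BCb (F n)) (hg : BCb g) (h : TendstoUniformly F g l) :
    TendstoUniformly (fun n => k ⋆ F n) (k ⋆ g) l := by
  rw [Metric.tendstoUniformly_iff] at h ⊢
  intro ε hε
  set K := ∫ u, ‖k u‖
  have hK : 0 ≤ K := integral_nonneg fun _ => norm_nonneg _
  have hδ : 0 < ε / (K + 1) := by positivity
  filter_upwards [h _ hδ] with n hn t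
  have hclose : ∀ s, ‖(g - F n) s‖ ≤ ε / (K + 1) := fun s => by
    rw [Pi.sub_apply, ← dist_eq_norm]
    exact (hn s).le
  rw [dist_eq_norm, ← Pi.sub_apply, ← hg.convolution_sub hk (hF n)]
  calc ‖(k ⋆ (g - F n)) t‖ ≤ K * (ε / (K + 1)) := norm_convolution_le hk hclose t
    _ < ε := by
      rw [mul_div_assoc', div_lt_iff₀ (by positivity)]
      nlinarith

lemma BCb.tendsto_convolution_zero {l : Filter ℝ} [l.IsCountablyGenerated] (hk : Integrable k)
    (hf : BCb f) (hl : ∀ u, Tendsto (fun t => t - u) l l) (h0 : Tendsto f l (𝓝 0)) :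
    Tendsto (k ⋆ f) l (𝓝 0) := by
  obtain ⟨hfc, C, hC⟩ := hf
  have h := tendsto_integral_filter_of_dominated_convergence (F := fun x u => k u * f (x - u))
    (f := fun _ => 0) (fun u => ‖k u‖ * C)
    (Eventually.of_forall fun x => hk.aestronglyMeasurable.mul
      (hfc.comp (continuous_const.sub continuous_id)).aestronglyMeasurable)
    (Eventually.of_forall fun x => ae_of_all _ fun u => by
      rw [norm_mul]; exact mul_le_mul_of_nonneg_left (hC _) (norm_nonneg _))
    (hk.norm.mul_const C)
    (ae_of_all _ fun u => by simpa only [mul_zero, Function.comp_apply] using (h0.comp (hl u)).const_mul (k u))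
  rw [integral_zero] at h
  exact h

lemma AP.convolution (hk : Integrable k) {φ : ℝ → ℂ} (hφ : AP φ) : AP (k ⋆ φ) := by
  obtain ⟨M, hM⟩ := hφ.bounded
  refine ⟨(hφ.bcb.convolution hk).1, fun b => ?_⟩
  obtain ⟨ψ, hψ, g, hg⟩ := hφ.2 b
  have htrans : ∀ m, BCb fun t => φ (t + b (ψ m)) := fun m =>
    ⟨hφ.1.comp (continuous_add_const _), M, fun t => hM _⟩
  have hgb : BCb g := BCb.of_tendstoUniformly (fun m => (htrans m).1) (fun m t => hM _) hg
  refine ⟨ψ, hψ, k ⋆ g, ?_⟩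
  simpa only [convolution_apply_add] using hg.convolution hk htrans hgb

lemma tendsto_sub_const_atTop_atTop (u : ℝ) : Tendsto (fun t => t - u) atTop atTop :=
  (map_sub_atTop_eq u).le

lemma tendsto_sub_const_atBot_atBot (u : ℝ) : Tendsto (fun t => t - u) atBot atBot := by
  simpa only [sub_eq_add_neg, id] using tendsto_atBot_add_const_right _ (-u) tendsto_id

lemma AAP.convolution (hk : Integrable k) (hf : AAP f) : AAP (k ⋆ f) := by
  obtain ⟨hfb, φ, g, hfg, hφ, hg⟩ := hf
  obtain rfl : g = f - φ := funext fun t => eq_sub_of_add_eq' (hfg t).symm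
  refine ⟨hfb.convolution hk, k ⋆ φ, k ⋆ f - k ⋆ φ,
    fun t => (add_sub_cancel _ _).symm, hφ.convolution hk, ?_⟩
  rw [← hfb.convolution_sub hk hφ.bcb]
  exact (hfb.sub hφ.bcb).tendsto_convolution_zero hk tendsto_sub_const_atTop_atTop hg

lemma AAP0.convolution (hk : Integrable k) (hf : AAP0 f) : AAP0 (k ⋆ f) := by
  obtain ⟨hfb, φ, g, hfg, hφ, hgtop, hgbot⟩ := hf
  obtain rfl : g = f - φ := funext fun t => eq_sub_of_add_eq' (hfg t).symm
  refine ⟨hfb.convolution hk, k ⋆ φ, k ⋆ f - k ⋆ φ,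
    fun t => (add_sub_cancel _ _).symm, hφ.convolution hk, ?_, ?_⟩ <;>
    rw [← hfb.convolution_sub hk hφ.bcb]
  · exact (hfb.sub hφ.bcb).tendsto_convolution_zero hk tendsto_sub_const_atTop_atTop hgtop
  · exact (hfb.sub hφ.bcb).tendsto_convolution_zero hk tendsto_sub_const_atBot_atBot hgbot

end Convolution

lemma gker_eq_gker_sub_zero (ω : ℂ) (t s : ℝ) : gker ω t s = gker ω (t - s) 0 := by
  simp [gker]

lemma integrable_gker {ω : ℂ} (hω : ω.re ≠ 0) : Integrable fun u => gker ω u 0 := by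
  rcases hω.lt_or_gt with hneg | hpos
  · have hk : (fun u => gker ω u 0) = (Ioi 0).indicator fun u : ℝ => Complex.exp (ω * u) := by
      ext u
      simp [gker, Real.sign_of_neg hneg, indicator_apply]
    rw [hk]
    exact (integrableOn_exp_mul_complex_Ioi hneg 0).integrable_indicator measurableSet_Ioi
  · have hk : (fun u => gker ω u 0) = (Iio 0).indicator fun u : ℝ => -Complex.exp (ω * u) := by
      ext u
      simp [gker, Real.sign_of_pos hpos, indicator_apply]
    rw [hk]
    exact ((integrableOn_exp_mul_complex_Iic hpos 0).mono_set Iio_subset_Iic_self).neg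
      |>.integrable_indicator measurableSet_Iio

lemma Gop_eq_convolution (ω : ℂ) (f : ℝ → ℂ) :
    Gop ω f = (fun u => gker ω u 0) ⋆ f := by
  ext t
  rw [convolution_mul_swap]
  simp only [Gop, gker_eq_gker_sub_zero ω t]

/-- `G_ω` preserves asymptotic almost periodicity (and the `AAP₀` class). -/
theorem stmt4 (ω : ℂ) (hω : ω.re ≠ 0) (f : ℝ → ℂ) :
    (AAP f → AAP (Gop ω f)) ∧ (AAP0 f → AAP0 (Gop ω f)) := by
  rw [Gop_eq_convolution]
  exact ⟨(·.convolution (integrable_gker hω)), (·.convolution (integrable_gker hω))⟩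

end
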